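/- For ξ = (ξ₁,ξ₂,0) ∈ ℝ³ with (ξ₁,ξ₂) ≠ (0,0), writing λ⁻(ξ) = (√(|ξ|²+2ξ₃+1) - √(|ξ|²-2ξ₃+1))/2, the Hessian of λ⁻ at (ξ₁,ξ₂,0) equals -(|ξ_h|²+1)^{-3/2} times the matrix with rows (0,0,ξ₁), (0,0,ξ₂), (ξ₁,ξ₂,0); in particular its rank is exactly 2. -/

import Mathlib

noncomputable def pd (f : (Fin 3 → ℝ) → ℝ) (x : Fin 3 → ℝ) (k : Fin 3) : ℝ :=
  fderiv ℝ f x (Pi.single k 1)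

noncomputable def hess (f : (Fin 3 → ℝ) → ℝ) (x : Fin 3 → ℝ) : Matrix (Fin 3) (Fin 3) ℝ :=
  Matrix.of fun k l => pd (fun y => pd f y l) x k

noncomputable def lamM (ξ : Fin 3 → ℝ) : ℝ :=
  (Real.sqrt (ξ 0 ^ 2 + ξ 1 ^ 2 + ξ 2 ^ 2 + 2 * ξ 2 + 1) -
    Real.sqrt (ξ 0 ^ 2 + ξ 1 ^ 2 + ξ 2 ^ 2 - 2 * ξ 2 + 1)) / 2

set_option linter.unnecessarySeqFocus false

open Real



abbrev E3 := Fin 3 → ℝ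

noncomputable def P3 (i : Fin 3) : E3 →L[ℝ] ℝ := ContinuousLinearMap.proj i

noncomputable def Fp (y : E3) : ℝ := y 0 ^ 2 + y 1 ^ 2 + y 2 ^ 2 + 2 * y 2 + 1
noncomputable def Fm (y : E3) : ℝ := y 0 ^ 2 + y 1 ^ 2 + y 2 ^ 2 - 2 * y 2 + 1

noncomputable def LP (y : E3) : E3 →L[ℝ] ℝ :=
  (2 * y 0) • P3 0 + (2 * y 1) • P3 1 + (2 * y 2 + 2) • P3 2
noncomputable def LM (y : E3) : E3 →L[ℝ] ℝ :=
  (2 * y 0) • P3 0 + (2 * y 1) • P3 1 + (2 * y 2 - 2) • P3 2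

lemma hasFDerivAt_Fp (y : E3) : HasFDerivAt Fp (LP y) y := by
  have h0 : HasFDerivAt (fun v : E3 => v 0) (P3 0) y := (P3 0).hasFDerivAt
  have h1 : HasFDerivAt (fun v : E3 => v 1) (P3 1) y := (P3 1).hasFDerivAt
  have h2 : HasFDerivAt (fun v : E3 => v 2) (P3 2) y := (P3 2).hasFDerivAt
  have H := ((((h0.mul h0).add (h1.mul h1)).add (h2.mul h2)).add (h2.const_mul 2)).add_const 1
  have hfun : Fp = fun v : E3 => v 0 * v 0 + v 1 * v 1 + v 2 * v 2 + 2 * v 2 + 1 := by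
    funext v; simp only [Fp]; ring
  rw [hfun]
  refine H.congr_fderiv ?_
  ext v
  simp [P3, LP, smul_eq_mul]
  ring

lemma hasFDerivAt_Fm (y : E3) : HasFDerivAt Fm (LM y) y := by
  have h0 : HasFDerivAt (fun v : E3 => v 0) (P3 0) y := (P3 0).hasFDerivAt
  have h1 : HasFDerivAt (fun v : E3 => v 1) (P3 1) y := (P3 1).hasFDerivAt
  have h2 : HasFDerivAt (fun v : E3 => v 2) (P3 2) y := (P3 2).hasFDerivAt
  have H := ((((h0.mul h0).add (h1.mul h1)).add (h2.mul h2)).sub (h2.const_mul 2)).add_const 1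
  have hfun : Fm = fun v : E3 => v 0 * v 0 + v 1 * v 1 + v 2 * v 2 - 2 * v 2 + 1 := by
    funext v; simp only [Fm]; ring
  rw [hfun]
  refine H.congr_fderiv ?_
  ext v
  simp [P3, LM, smul_eq_mul]
  ring

noncomputable def gradP (l : Fin 3) (y : E3) : ℝ := ![2 * y 0, 2 * y 1, 2 * y 2 + 2] l
noncomputable def gradM (l : Fin 3) (y : E3) : ℝ := ![2 * y 0, 2 * y 1, 2 * y 2 - 2] l

lemma LP_apply (y : E3) (l : Fin 3) : LP y (Pi.single l 1) = gradP l y := by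
  fin_cases l <;> simp [LP, P3, gradP, Pi.single_apply]

lemma LM_apply (y : E3) (l : Fin 3) : LM y (Pi.single l 1) = gradM l y := by
  fin_cases l <;> simp [LM, P3, gradM, Pi.single_apply]

lemma hasFDerivAt_lamM (y : E3) (hp : 0 < Fp y) (hm : 0 < Fm y) :
    HasFDerivAt lamM
      ((2:ℝ)⁻¹ • ((1 / (2 * Real.sqrt (Fp y))) • LP y - (1 / (2 * Real.sqrt (Fm y))) • LM y)) y := by
  have hlam_eq : lamM = fun v : E3 => (2:ℝ)⁻¹ * (Real.sqrt (Fp v) - Real.sqrt (Fm v)) := by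
    funext v; simp only [lamM, Fp, Fm]; ring
  rw [hlam_eq]
  have H := ((((hasFDerivAt_Fp y).sqrt hp.ne').sub ((hasFDerivAt_Fm y).sqrt hm.ne')).const_mul
    (2⁻¹ : ℝ))
  exact H.congr_fderiv rfl

lemma pd_lamM (y : E3) (hp : 0 < Fp y) (hm : 0 < Fm y) (l : Fin 3) :
    pd lamM y l =
      4⁻¹ * gradP l y * (Real.sqrt (Fp y))⁻¹ - 4⁻¹ * gradM l y * (Real.sqrt (Fm y))⁻¹ := by
  have H := hasFDerivAt_lamM y hp hm
  have hsp : Real.sqrt (Fp y) ≠ 0 := (Real.sqrt_pos.2 hp).ne'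
  have hsm : Real.sqrt (Fm y) ≠ 0 := (Real.sqrt_pos.2 hm).ne'
  rw [pd, H.fderiv]
  simp [LP_apply, LM_apply, smul_eq_mul]
  field_simp
  ring

lemma hess_lamM_entry (ξ₁ ξ₂ : ℝ) (k l : Fin 3) :
    hess lamM ![ξ₁, ξ₂, 0] k l =
      -(gradP l ![ξ₁, ξ₂, 0] * gradP k ![ξ₁, ξ₂, 0] -
          gradM l ![ξ₁, ξ₂, 0] * gradM k ![ξ₁, ξ₂, 0]) /
        (8 * (ξ₁ ^ 2 + ξ₂ ^ 2 + 1) * Real.sqrt (ξ₁ ^ 2 + ξ₂ ^ 2 + 1)) := by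
  set x : E3 := ![ξ₁, ξ₂, 0] with hxdef
  set s : ℝ := ξ₁ ^ 2 + ξ₂ ^ 2 + 1 with hsdef
  have hspos : (0:ℝ) < s := by positivity
  have hx0 : x 0 = ξ₁ := rfl
  have hx1 : x 1 = ξ₂ := rfl
  have hx2 : x 2 = 0 := rfl
  have hFpx : Fp x = s := by simp [Fp, hx0, hx1, hx2, hsdef]
  have hFmx : Fm x = s := by simp [Fm, hx0, hx1, hx2, hsdef]
  have hq : 0 < Real.sqrt s := Real.sqrt_pos.2 hspos
  have hcontp : Continuous Fp := by unfold Fp; fun_prop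
  have hcontm : Continuous Fm := by unfold Fm; fun_prop
  have hU : IsOpen {y : E3 | 0 < Fp y ∧ 0 < Fm y} :=
    (isOpen_lt continuous_const hcontp).inter (isOpen_lt continuous_const hcontm)
  have hxU : x ∈ {y : E3 | 0 < Fp y ∧ 0 < Fm y} :=
    ⟨by rw [hFpx]; exact hspos, by rw [hFmx]; exact hspos⟩
  have hev : (fun y => pd lamM y l) =ᶠ[nhds x]
      (fun y => 4⁻¹ * gradP l y * (Real.sqrt (Fp y))⁻¹
        - 4⁻¹ * gradM l y * (Real.sqrt (Fm y))⁻¹) := by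
    filter_upwards [hU.mem_nhds hxU] with y hy
    exact pd_lamM y hy.1 hy.2 l
  have hgP : HasFDerivAt (gradP l) ((2:ℝ) • P3 l) x := by
    fin_cases l
    · exact (P3 0).hasFDerivAt.const_mul 2
    · exact (P3 1).hasFDerivAt.const_mul 2
    · exact ((P3 2).hasFDerivAt.const_mul 2).add_const 2
  have hgM : HasFDerivAt (gradM l) ((2:ℝ) • P3 l) x := by
    fin_cases l
    · exact (P3 0).hasFDerivAt.const_mul 2
    · exact (P3 1).hasFDerivAt.const_mul 2
    · exact ((P3 2).hasFDerivAt.const_mul 2).sub_const 2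
  have hsqP : HasFDerivAt (fun y => Real.sqrt (Fp y)) ((1 / (2 * Real.sqrt s)) • LP x) x := by
    have := (hasFDerivAt_Fp x).sqrt (by rw [hFpx]; exact hspos.ne')
    rwa [hFpx] at this
  have hsqM : HasFDerivAt (fun y => Real.sqrt (Fm y)) ((1 / (2 * Real.sqrt s)) • LM x) x := by
    have := (hasFDerivAt_Fm x).sqrt (by rw [hFmx]; exact hspos.ne')
    rwa [hFmx] at this
  have hdinvP : HasDerivAt (fun t : ℝ => t⁻¹) (-(Real.sqrt s ^ 2)⁻¹)
      ((fun y => Real.sqrt (Fp y)) x) := by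
    simp only [hFpx]; exact hasDerivAt_inv hq.ne'
  have hdinvM : HasDerivAt (fun t : ℝ => t⁻¹) (-(Real.sqrt s ^ 2)⁻¹)
      ((fun y => Real.sqrt (Fm y)) x) := by
    simp only [hFmx]; exact hasDerivAt_inv hq.ne'
  have hinvP : HasFDerivAt (fun y => (Real.sqrt (Fp y))⁻¹)
      ((-(Real.sqrt s ^ 2)⁻¹) • ((1 / (2 * Real.sqrt s)) • LP x)) x :=
    hdinvP.comp_hasFDerivAt x hsqP
  have hinvM : HasFDerivAt (fun y => (Real.sqrt (Fm y))⁻¹)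
      ((-(Real.sqrt s ^ 2)⁻¹) • ((1 / (2 * Real.sqrt s)) • LM x)) x :=
    hdinvM.comp_hasFDerivAt x hsqM
  have hP := (hgP.const_mul (4⁻¹ : ℝ)).mul hinvP
  have hM := (hgM.const_mul (4⁻¹ : ℝ)).mul hinvM
  have HG := hP.sub hM
  have hentry : hess lamM x k l = (fderiv ℝ (fun y => pd lamM y l) x) (Pi.single k 1) := rfl
  rw [hentry, hev.fderiv_eq, (show HasFDerivAt (fun y => 4⁻¹ * gradP l y * (Real.sqrt (Fp y))⁻¹
    - 4⁻¹ * gradM l y * (Real.sqrt (Fm y))⁻¹) _ x from HG).fderiv]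
  have hq2 : Real.sqrt s ^ 2 = s := Real.sq_sqrt hspos.le
  simp only [ContinuousLinearMap.sub_apply, ContinuousLinearMap.add_apply,
    ContinuousLinearMap.smul_apply, smul_eq_mul, LP_apply, LM_apply, hFpx, hFmx, hq2,
    P3, ContinuousLinearMap.proj_apply]
  field_simp
  ring

lemma rank_aux (ξ₁ ξ₂ : ℝ) (h : ξ₁ ≠ 0 ∨ ξ₂ ≠ 0) :
    (!![0, 0, ξ₁; 0, 0, ξ₂; ξ₁, ξ₂, 0] : Matrix (Fin 3) (Fin 3) ℝ).rank = 2 := by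
  set A : Matrix (Fin 3) (Fin 3) ℝ := !![0, 0, ξ₁; 0, 0, ξ₂; ξ₁, ξ₂, 0] with hA
  set T := A.mulVecLin with hT
  have hsu : (0:ℝ) < ξ₁ ^ 2 + ξ₂ ^ 2 := by
    rcases h with h | h
    · have : (0:ℝ) < ξ₁ ^ 2 := by positivity
      nlinarith [sq_nonneg ξ₂]
    · have : (0:ℝ) < ξ₂ ^ 2 := by positivity
      nlinarith [sq_nonneg ξ₁]
  have hu : A.mulVec (Pi.single 2 1) = ![ξ₁, ξ₂, 0] := by
    funext i
    fin_cases i <;>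
      simp [hA, Matrix.mulVec, dotProduct, Fin.sum_univ_three, Pi.single_apply]
  have hw : A.mulVec ![ξ₁, ξ₂, 0] = ![0, 0, ξ₁ ^ 2 + ξ₂ ^ 2] := by
    funext i
    fin_cases i <;>
      simp [hA, Matrix.mulVec, dotProduct, Fin.sum_univ_three] <;> ring
  have hk : A.mulVec ![ξ₂, -ξ₁, 0] = 0 := by
    funext i
    fin_cases i <;>
      simp [hA, Matrix.mulVec, dotProduct, Fin.sum_univ_three] <;> ring
  have hli : LinearIndependent ℝ ![(![ξ₁, ξ₂, 0] : E3), ![0, 0, ξ₁ ^ 2 + ξ₂ ^ 2]] := by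
    rw [linearIndependent_fin2]
    constructor
    · intro H
      have := congrFun H 2
      simp at this
      nlinarith
    · intro a H
      rcases h with h | h
      · have := congrFun H 0
        simp at this
        exact h this.symm
      · have := congrFun H 1
        simp at this
        exact h this.symm
  have hle2 : 2 ≤ A.rank := by
    have hsub : Submodule.span ℝ (Set.range ![(![ξ₁, ξ₂, 0] : E3), ![0, 0, ξ₁ ^ 2 + ξ₂ ^ 2]]) ≤
        LinearMap.range T := by
      rw [Submodule.span_le]
      rintro _ ⟨i, rfl⟩
      fin_cases i
      · exact ⟨Pi.single 2 1, by rw [hT, Matrix.mulVecLin_apply]; exact hu⟩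
      · exact ⟨![ξ₁, ξ₂, 0], by rw [hT, Matrix.mulVecLin_apply]; exact hw⟩
    have := Submodule.finrank_mono hsub
    rw [finrank_span_eq_card hli] at this
    simpa [Matrix.rank] using this
  have hge2 : A.rank ≤ 2 := by
    have hrn := LinearMap.finrank_range_add_finrank_ker T
    have hdim : Module.finrank ℝ (Fin 3 → ℝ) = 3 := by simp
    have hker : 0 < Module.finrank ℝ (LinearMap.ker T) := by
      rw [Module.finrank_pos_iff]
      refine ⟨⟨⟨![ξ₂, -ξ₁, 0], ?_⟩, 0, ?_⟩⟩
      · rw [LinearMap.mem_ker, hT, Matrix.mulVecLin_apply]; exact hk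
      · simp only [ne_eq, Submodule.mk_eq_zero]
        intro H
        rcases h with h | h
        · exact h (by have := congrFun H 1; simpa using this)
        · exact h (by have := congrFun H 0; simpa using this)
    have : A.rank = Module.finrank ℝ (LinearMap.range T) := rfl
    omega
  omega

lemma hrpow (s : ℝ) (hs : 0 < s) : s ^ ((-3 : ℝ) / 2) = (s * Real.sqrt s)⁻¹ := by
  rw [show ((-3 : ℝ) / 2) = -(3 / 2) by norm_num, Real.rpow_neg hs.le]
  congr 1
  rw [show ((3 : ℝ) / 2) = 1 + 1 / 2 by norm_num, Real.rpow_add hs, Real.rpow_one,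
    Real.sqrt_eq_rpow]

theorem hess_lamM_on_plane (ξ₁ ξ₂ : ℝ) (h : (ξ₁, ξ₂) ≠ (0, 0)) :
    hess lamM ![ξ₁, ξ₂, 0] =
      (-((ξ₁ ^ 2 + ξ₂ ^ 2 + 1) ^ ((-3 : ℝ) / 2))) •
        !![0, 0, ξ₁; 0, 0, ξ₂; ξ₁, ξ₂, 0] ∧
    (hess lamM ![ξ₁, ξ₂, 0]).rank = 2 := by
  have hne : ξ₁ ≠ 0 ∨ ξ₂ ≠ 0 := by
    by_contra hc
    push_neg at hc
    exact h (by rw [hc.1, hc.2])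
  have hspos : (0:ℝ) < ξ₁ ^ 2 + ξ₂ ^ 2 + 1 := by positivity
  have hq : (0:ℝ) < Real.sqrt (ξ₁ ^ 2 + ξ₂ ^ 2 + 1) := Real.sqrt_pos.2 hspos
  have hmain : hess lamM ![ξ₁, ξ₂, 0] =
      (-((ξ₁ ^ 2 + ξ₂ ^ 2 + 1) ^ ((-3 : ℝ) / 2))) •
        !![0, 0, ξ₁; 0, 0, ξ₂; ξ₁, ξ₂, 0] := by
    ext k l
    rw [hess_lamM_entry, hrpow _ hspos]
    fin_cases k <;> fin_cases l <;>
      simp [gradP, gradM] <;> (try field_simp) <;> (try ring)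
  refine ⟨hmain, ?_⟩
  rw [hmain]
  have hc : (-((ξ₁ ^ 2 + ξ₂ ^ 2 + 1) ^ ((-3 : ℝ) / 2))) ≠ 0 := by
    have := Real.rpow_pos_of_pos hspos ((-3 : ℝ) / 2)
    simpa using this.ne'
  have hsm : (-((ξ₁ ^ 2 + ξ₂ ^ 2 + 1) ^ ((-3 : ℝ) / 2))) •
      (!![0, 0, ξ₁; 0, 0, ξ₂; ξ₁, ξ₂, 0] : Matrix (Fin 3) (Fin 3) ℝ) =
      ((-((ξ₁ ^ 2 + ξ₂ ^ 2 + 1) ^ ((-3 : ℝ) / 2))) • (1 : Matrix (Fin 3) (Fin 3) ℝ)) *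
        !![0, 0, ξ₁; 0, 0, ξ₂; ξ₁, ξ₂, 0] := by
    rw [Matrix.smul_mul, one_mul]
  rw [hsm, Matrix.rank_mul_eq_right_of_isUnit_det, rank_aux ξ₁ ξ₂ hne]
  rw [Matrix.det_smul, Matrix.det_one]
  simp only [Fintype.card_fin, mul_one]
  exact (isUnit_iff_ne_zero.2 (pow_ne_zero 3 hc))
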